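/- Let f = x1³ + x2²x3 ∈ ℂ[x1,x2,x3]. The point (3,2,2) ∈ ℂ³ lies in the Minkowski sum V(f)* + Sing(f) (indeed (3,2,2) = (3,2,1) + (0,0,1) with (3,2,1) ∈ V(f)* and (0,0,1) ∈ Sing(f)), but (3,2,2) does not lie in the ED data singular locus DS(f). Hence the inclusion DS(f) ⊆ V(f)* + Sing(f) is strict for this f. -/

import Mathlib

open MvPolynomial Pointwise

/-- Gradient of a multivariate polynomial at a point. -/
noncomputable def grad {n : ℕ} (f : MvPolynomial (Fin n) ℂ) (x : Fin n → ℂ) : Fin n → ℂ :=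
  fun i => eval x (pderiv i f)

/-- Zariski closure: zero locus of the ideal of all polynomials vanishing on `S`. -/
def zclosure {σ : Type} (S : Set (σ → ℂ)) : Set (σ → ℂ) :=
  {x | ∀ p : MvPolynomial σ ℂ, (∀ s ∈ S, eval s p = 0) → eval x p = 0}

/-- Zero locus `V(f)`. -/
def Vp {n : ℕ} (f : MvPolynomial (Fin n) ℂ) : Set (Fin n → ℂ) := {x | eval x f = 0}

/-- Regular locus. -/
def RegL {n : ℕ} (f : MvPolynomial (Fin n) ℂ) : Set (Fin n → ℂ) :=
  {x | eval x f = 0 ∧ grad f x ≠ 0}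

/-- Singular locus. -/
def SingL {n : ℕ} (f : MvPolynomial (Fin n) ℂ) : Set (Fin n → ℂ) :=
  {x | eval x f = 0 ∧ grad f x = 0}

/-- ED correspondence: Zariski closure of pairs (u,x), x regular, u - x ∈ ℂ·∇f(x),
encoded as functions on `Fin n ⊕ Fin n`. -/
def EDcorr {n : ℕ} (f : MvPolynomial (Fin n) ℂ) : Set ((Fin n ⊕ Fin n) → ℂ) :=
  zclosure {w | ∃ u x : Fin n → ℂ, w = Sum.elim u x ∧ x ∈ RegL f ∧ ∃ t : ℂ, u - x = t • grad f x}

/-- ED data singular locus. -/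
def DS {n : ℕ} (f : MvPolynomial (Fin n) ℂ) : Set (Fin n → ℂ) :=
  {u | ∃ x, Sum.elim u x ∈ EDcorr f ∧ x ∈ SingL f}

/-- Dual variety. -/
def dualV {n : ℕ} (f : MvPolynomial (Fin n) ℂ) : Set (Fin n → ℂ) :=
  zclosure {y | ∃ (t : ℂ) (x : Fin n → ℂ), x ∈ RegL f ∧ y = t • grad f x}

/-- Isotropic quadric. -/
def isoQ (n : ℕ) : Set (Fin n → ℂ) := {x | ∑ i, (x i) ^ 2 = 0}

/-- ED data isotropic locus. -/
def DI {n : ℕ} (f : MvPolynomial (Fin n) ℂ) : Set (Fin n → ℂ) :=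
  {u | ∃ x, Sum.elim u x ∈ EDcorr f ∧ x ∈ isoQ n ∩ Vp f}

/-- Zariski-closed sets. -/
def IsZClosed {σ : Type} (S : Set (σ → ℂ)) : Prop := zclosure S = S

/-- Irreducibility with respect to Zariski-closed sets. -/
def IsZIrreducible {σ : Type} (S : Set (σ → ℂ)) : Prop :=
  S.Nonempty ∧ ∀ C₁ C₂ : Set (σ → ℂ), IsZClosed C₁ → IsZClosed C₂ →
    S ⊆ C₁ ∪ C₂ → S ⊆ C₁ ∨ S ⊆ C₂

/-- `C` is an irreducible component of `S`. -/
def IsIrredComponentOf {σ : Type} (C S : Set (σ → ℂ)) : Prop :=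
  C ⊆ S ∧ IsZClosed C ∧ IsZIrreducible C ∧
    ∀ C' : Set (σ → ℂ), IsZClosed C' → IsZIrreducible C' → C ⊆ C' → C' ⊆ S → C' = C


/-!
Points of the ED correspondence satisfy two closed conditions that survive the Zariski
closure: `u - x` lies in the dual variety (it is a multiple of a gradient), and, since `f` is
homogeneous, Euler's identity makes `x` orthogonal to `u - x`. The first gives
`DS(f) ⊆ V(f)* + Sing(f)` via `u = (u - x) + x`. For the cuspidal cubic, `V(f)*` lies in the
discriminant surface `4 y₁³ = 27 y₂² y₃`, and `Sing(f)` is the `x₃`-axis; for `u = (3,2,2)` and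
`x = (0,0,s)` the discriminant forces `s = 1`, while orthogonality forces `s (2 - s) = 0`.
-/

open Matrix

lemma subset_zclosure {σ : Type} (S : Set (σ → ℂ)) : S ⊆ zclosure S :=
  fun x hx _ hp => hp x hx

section General

variable {n : ℕ} {f : MvPolynomial (Fin n) ℂ}

lemma smul_grad_mem_dualV {x : Fin n → ℂ} (hx : x ∈ RegL f) (t : ℂ) :
    t • grad f x ∈ dualV f :=
  subset_zclosure _ ⟨t, x, hx, rfl⟩

lemma MvPolynomial.IsHomogeneous.dotProduct_grad {d : ℕ} (hf : f.IsHomogeneous d)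
    (x : Fin n → ℂ) : x ⬝ᵥ grad f x = d * eval x f := by
  simpa [dotProduct, grad] using congrArg (eval x) hf.sum_X_mul_pderiv

lemma eval_bind₁_inl_sub_inr (p : MvPolynomial (Fin n) ℂ) (u x : Fin n → ℂ) :
    eval (Sum.elim u x) (bind₁ (fun i => X (Sum.inl i) - X (Sum.inr i)) p) = eval (u - x) p := by
  rw [eval, eval₂Hom_bind₁]
  congr
  ext i
  simp

lemma sub_mem_dualV_of_mem_EDcorr {u x : Fin n → ℂ} (h : Sum.elim u x ∈ EDcorr f) :
    u - x ∈ dualV f := by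
  intro p hp
  rw [← eval_bind₁_inl_sub_inr]
  refine h _ ?_
  rintro _ ⟨u', x', rfl, hx', t, ht⟩
  rw [eval_bind₁_inl_sub_inr, ht]
  exact hp _ ⟨t, x', hx', rfl⟩

lemma MvPolynomial.IsHomogeneous.dotProduct_sub_eq_zero_of_mem_EDcorr {d : ℕ}
    (hf : f.IsHomogeneous d) {u x : Fin n → ℂ} (h : Sum.elim u x ∈ EDcorr f) :
    x ⬝ᵥ (u - x) = 0 := by
  have key := h (∑ i, X (Sum.inr i) * (X (Sum.inl i) - X (Sum.inr i))) <| by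
    rintro _ ⟨u', x', rfl, ⟨hf', -⟩, t, ht⟩
    have : x' ⬝ᵥ (u' - x') = 0 := by
      rw [ht, dotProduct_smul, hf.dotProduct_grad, hf', mul_zero, smul_zero]
    simpa [dotProduct] using this
  simpa [dotProduct] using key

theorem DS_subset_dualV_add_SingL : DS f ⊆ dualV f + SingL f := by
  rintro u ⟨x, hE, hx⟩
  exact ⟨u - x, sub_mem_dualV_of_mem_EDcorr hE, x, hx, sub_add_cancel u x⟩

end General

noncomputable abbrev cuspidalCubic : MvPolynomial (Fin 3) ℂ := X 0 ^ 3 + X 1 ^ 2 * X 2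

lemma cuspidalCubic_isHomogeneous : cuspidalCubic.IsHomogeneous 3 :=
  (isHomogeneous_X_pow 0 3).add ((isHomogeneous_X_pow 1 2).mul (isHomogeneous_X ℂ 2))

lemma eval_cuspidalCubic (x : Fin 3 → ℂ) : eval x cuspidalCubic = x 0 ^ 3 + x 1 ^ 2 * x 2 := by
  simp

lemma grad_cuspidalCubic (x : Fin 3 → ℂ) :
    grad cuspidalCubic x = ![3 * x 0 ^ 2, 2 * x 1 * x 2, x 1 ^ 2] := by
  funext i
  fin_cases i <;> simp [grad, pderiv_X]; ring

lemma mem_SingL_cuspidalCubic_iff {x : Fin 3 → ℂ} :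
    x ∈ SingL cuspidalCubic ↔ x 0 = 0 ∧ x 1 = 0 := by
  simp only [SingL, Set.mem_ofPred_eq, eval_cuspidalCubic, grad_cuspidalCubic, funext_iff,
    Fin.forall_fin_succ]
  constructor
  · rintro ⟨-, h0, -, h1, -⟩
    simpa using And.intro h0 h1
  · rintro ⟨h0, h1⟩
    simp [h0, h1]

lemma discriminant_eq_zero_of_mem_dualV_cuspidalCubic {y : Fin 3 → ℂ}
    (hy : y ∈ dualV cuspidalCubic) : 4 * y 0 ^ 3 - 27 * y 1 ^ 2 * y 2 = 0 := by
  have key := hy (4 * X 0 ^ 3 - 27 * X 1 ^ 2 * X 2) <| by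
    rintro _ ⟨t, x, ⟨hx, -⟩, rfl⟩
    rw [eval_cuspidalCubic] at hx
    simp only [grad_cuspidalCubic, map_sub, map_mul, map_pow, eval_X, Pi.smul_apply,
      smul_eq_mul, cons_val, map_ofNat]
    linear_combination 108 * t ^ 3 * (x 0 ^ 3 - x 1 ^ 2 * x 2) * hx
  simpa using key

lemma notMem_DS_cuspidalCubic : (![3, 2, 2] : Fin 3 → ℂ) ∉ DS cuspidalCubic := by
  rintro ⟨x, hE, hx⟩
  obtain ⟨hx0, hx1⟩ := mem_SingL_cuspidalCubic_iff.mp hx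
  have hdisc := discriminant_eq_zero_of_mem_dualV_cuspidalCubic (sub_mem_dualV_of_mem_EDcorr hE)
  have horth := cuspidalCubic_isHomogeneous.dotProduct_sub_eq_zero_of_mem_EDcorr hE
  simp only [Pi.sub_apply, hx0, hx1, cons_val] at hdisc
  simp only [dotProduct, Fin.sum_univ_three, Pi.sub_apply, hx0, hx1, cons_val] at horth
  have hx2 : x 2 = 1 := by linear_combination hdisc / 108
  rw [hx2] at horth
  norm_num at horth

/-- For the cuspidal cubic cone `f = x₁³ + x₂²x₃`: the point `(3,2,2) = (3,2,1) + (0,0,1)` lies in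
`V(f)* + Sing(f)` but not in `DS(f)`; hence the inclusion `DS(f) ⊆ V(f)* + Sing(f)` is strict. -/
theorem DS_cuspidal_cubic_strict :
    (![3, 2, 1] : Fin 3 → ℂ) ∈ dualV (X 0 ^ 3 + X 1 ^ 2 * X 2 : MvPolynomial (Fin 3) ℂ) ∧
    (![0, 0, 1] : Fin 3 → ℂ) ∈ SingL (X 0 ^ 3 + X 1 ^ 2 * X 2 : MvPolynomial (Fin 3) ℂ) ∧
    (![3, 2, 2] : Fin 3 → ℂ) ∈
      dualV (X 0 ^ 3 + X 1 ^ 2 * X 2 : MvPolynomial (Fin 3) ℂ) +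
        SingL (X 0 ^ 3 + X 1 ^ 2 * X 2 : MvPolynomial (Fin 3) ℂ) ∧
    (![3, 2, 2] : Fin 3 → ℂ) ∉ DS (X 0 ^ 3 + X 1 ^ 2 * X 2 : MvPolynomial (Fin 3) ℂ) ∧
    DS (X 0 ^ 3 + X 1 ^ 2 * X 2 : MvPolynomial (Fin 3) ℂ) ⊂
      dualV (X 0 ^ 3 + X 1 ^ 2 * X 2 : MvPolynomial (Fin 3) ℂ) +
        SingL (X 0 ^ 3 + X 1 ^ 2 * X 2 : MvPolynomial (Fin 3) ℂ) := by
  have hdual : (![3, 2, 1] : Fin 3 → ℂ) ∈ dualV cuspidalCubic := by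
    have hreg : ![-1, 1, 1] ∈ RegL cuspidalCubic := by
      refine ⟨by simp [eval_cuspidalCubic, cons_val]; norm_num, fun h => ?_⟩
      simpa [grad_cuspidalCubic] using congrFun h 1
    simpa [grad_cuspidalCubic] using smul_grad_mem_dualV hreg 1
  have hsing : (![0, 0, 1] : Fin 3 → ℂ) ∈ SingL cuspidalCubic :=
    mem_SingL_cuspidalCubic_iff.mpr ⟨rfl, rfl⟩
  have hsum : (![3, 2, 2] : Fin 3 → ℂ) ∈ dualV cuspidalCubic + SingL cuspidalCubic :=
    ⟨_, hdual, _, hsing, by ext i; fin_cases i <;> norm_num⟩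
  exact ⟨hdual, hsing, hsum, notMem_DS_cuspidalCubic,
    (Set.ssubset_iff_of_subset DS_subset_dualV_add_SingL).mpr ⟨_, hsum, notMem_DS_cuspidalCubic⟩⟩
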